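/- Define R₀ : D → D in polar coordinates by R₀(t e^{iθ}) = t·exp(i(θ + arccos((1+t²)/2))). Then for every w ∈ D \ {0}, the hyperbolic triangle with vertices 0, w, and R₀(w) is equilateral, i.e. ρ(0,w) = ρ(0,R₀(w)) = ρ(w,R₀(w)). -/

import Mathlib

open Complex

/-- The hyperbolic metric on the unit disk:
ρ(z,w) = log((1+|(z−w)/(1−conj(w)z)|)/(1−|(z−w)/(1−conj(w)z)|)). -/
noncomputable def hypDist (z w : ℂ) : ℝ :=
  Real.log ((1 + ‖(z - w) / (1 - (starRingEnd ℂ) w * z)‖) /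
    (1 - ‖(z - w) / (1 - (starRingEnd ℂ) w * z)‖))

/-- The rotation-type map R₀(t e^{iθ}) = t·exp(i(θ + arccos((1+t²)/2))), written
coordinate-free as R₀(z) = z·exp(i·arccos((1+|z|²)/2)). -/
noncomputable def Rzero (z : ℂ) : ℂ :=
  z * Complex.exp (Complex.I * (Real.arccos ((1 + ‖z‖ ^ 2) / 2) : ℂ))

/-! All three sides have pseudo-hyperbolic length `|w|`. For `|z| = t` and a unit `u = e^{iα}`,
`|z - zu| / |1 - conj(zu) z| = t |1 - u| / |1 - t² ū|`, and
`|1 - u|² = 2 - 2 cos α`, `|1 - t² ū|² = 1 - 2 t² cos α + t⁴`; these agree (both `= 1 - t²`)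
exactly when `cos α = (1 + t²)/2`. -/

noncomputable def pseudoHypDist (z w : ℂ) : ℝ :=
  ‖(z - w) / (1 - (starRingEnd ℂ) w * z)‖

theorem hypDist_eq_log_pseudoHypDist (z w : ℂ) :
    hypDist z w = Real.log ((1 + pseudoHypDist z w) / (1 - pseudoHypDist z w)) :=
  rfl

@[simp]
theorem pseudoHypDist_zero_left (z : ℂ) : pseudoHypDist 0 z = ‖z‖ := by
  simp [pseudoHypDist]

theorem norm_one_sub_ofReal_mul_exp_sq (r α : ℝ) :
    ‖1 - r * exp (α * I)‖ ^ 2 = 1 - 2 * r * Real.cos α + r ^ 2 := by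
  have hsplit : 1 - (r : ℂ) * exp (α * I) =
      ((1 - r * Real.cos α : ℝ) : ℂ) + ((-(r * Real.sin α) : ℝ) : ℂ) * I := by
    rw [exp_mul_I, ← ofReal_cos, ← ofReal_sin]
    push_cast
    ring
  rw [hsplit, norm_add_mul_I, Real.sq_sqrt (by positivity)]
  nlinarith [Real.sin_sq_add_cos_sq α]

theorem pseudoHypDist_mul_exp_of_cos_eq {z : ℂ} {α : ℝ} (hz : ‖z‖ < 1)
    (hcos : Real.cos α = (1 + ‖z‖ ^ 2) / 2) :
    pseudoHypDist z (z * exp (α * I)) = ‖z‖ := by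
  have hconj : (starRingEnd ℂ) (z * exp (α * I)) * z = (‖z‖ ^ 2 : ℝ) * exp ((-α : ℝ) * I) := by
    rw [map_mul, ← exp_conj, map_mul, conj_ofReal, conj_I, mul_right_comm,
      mul_comm ((starRingEnd ℂ) z), mul_conj, normSq_eq_norm_sq, ofReal_neg, neg_mul, mul_neg]
  have hnum : z - z * exp (α * I) = z * (1 - exp (α * I)) := by ring
  have hden_pos : 0 < 1 - ‖z‖ ^ 2 := by nlinarith [norm_nonneg z]
  have hnum_sq : ‖1 - exp (α * I)‖ ^ 2 = 1 - ‖z‖ ^ 2 := by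
    have h := norm_one_sub_ofReal_mul_exp_sq 1 α
    rw [ofReal_one, one_mul, hcos] at h
    linarith
  have hden_sq : ‖1 - (‖z‖ ^ 2 : ℝ) * exp ((-α : ℝ) * I)‖ ^ 2 = 1 - ‖z‖ ^ 2 := by
    rw [norm_one_sub_ofReal_mul_exp_sq, Real.cos_neg, hcos]
    ring
  have hfactor_eq : ‖1 - (‖z‖ ^ 2 : ℝ) * exp ((-α : ℝ) * I)‖ = ‖1 - exp (α * I)‖ :=
    (sq_eq_sq₀ (norm_nonneg _) (norm_nonneg _)).mp (hden_sq.trans hnum_sq.symm)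
  have hfactor_ne : ‖1 - exp (α * I)‖ ≠ 0 := by
    intro h
    rw [h] at hnum_sq
    linarith
  rw [pseudoHypDist, hconj, hnum, norm_div, norm_mul, hfactor_eq, mul_div_assoc,
    div_self hfactor_ne, mul_one]

theorem norm_Rzero (z : ℂ) : ‖Rzero z‖ = ‖z‖ := by
  rw [Rzero, norm_mul, mul_comm I, norm_exp_ofReal_mul_I, mul_one]

theorem Rzero_equilateral_general (w : ℂ) (hw : w ∈ Metric.ball (0 : ℂ) 1) :
    hypDist 0 w = hypDist 0 (Rzero w) ∧ hypDist 0 w = hypDist w (Rzero w) := by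
  have hw1 : ‖w‖ < 1 := mem_ball_zero_iff.mp hw
  have hcos : Real.cos (Real.arccos ((1 + ‖w‖ ^ 2) / 2)) = (1 + ‖w‖ ^ 2) / 2 :=
    Real.cos_arccos (by nlinarith [norm_nonneg w]) (by nlinarith [norm_nonneg w])
  have hside : pseudoHypDist w (Rzero w) = ‖w‖ := by
    rw [Rzero, mul_comm I]
    exact pseudoHypDist_mul_exp_of_cos_eq hw1 hcos
  simp only [hypDist_eq_log_pseudoHypDist, pseudoHypDist_zero_left, norm_Rzero, hside, and_self]

/-- For every w ∈ D \ {0}, the hyperbolic triangle with vertices 0, w, R₀(w)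
is equilateral: ρ(0,w) = ρ(0,R₀(w)) = ρ(w,R₀(w)). -/
theorem Rzero_equilateral (w : ℂ) (hw : w ∈ Metric.ball (0 : ℂ) 1) (hw0 : w ≠ 0) :
    hypDist 0 w = hypDist 0 (Rzero w) ∧ hypDist 0 w = hypDist w (Rzero w) :=
  Rzero_equilateral_general w hw
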